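/- For every n with 4 ≤ n ≤ 10, ext(n,{K_{1,3}+e, C_4}) = ext(n,{C_3, C_4}), i.e., the maximum number of edges of an n-vertex graph containing neither a copy of K_{1,3}+e nor a 4-cycle equals the maximum number of edges of an n-vertex graph containing neither a triangle nor a 4-cycle. -/

import Mathlib

open SimpleGraph

/-- `G` contains a (not necessarily induced) subgraph copy of `H`. -/
def ContainsCopy {V W : Type*} (G : SimpleGraph V) (H : SimpleGraph W) : Prop :=
  ∃ f : W → V, Function.Injective f ∧ ∀ u v, H.Adj u v → G.Adj (f u) (f v)

/-- The Turán number `ext(n, {H₁, H₂})`: the maximum number of edges of a graph on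
`n` vertices containing no copy of `H₁` and no copy of `H₂`. -/
noncomputable def extNum2 (n : ℕ) {V₁ V₂ : Type*}
    (H₁ : SimpleGraph V₁) (H₂ : SimpleGraph V₂) : ℕ :=
  sSup {m | ∃ G : SimpleGraph (Fin n),
    G.edgeSet.ncard = m ∧ ¬ ContainsCopy G H₁ ∧ ¬ ContainsCopy G H₂}

/-- `K_{1,3} + e`: a triangle with a pendant edge. -/
def K13e : SimpleGraph (Fin 4) :=
  SimpleGraph.fromEdgeSet {s(0, 1), s(0, 2), s(1, 2), s(0, 3)}

/-!
In a graph without `K_{1,3}+e` the vertices of a triangle have no neighbours outside it, so the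
triangles are pairwise disjoint connected components, each contributing as many edges as
vertices. If there are at least two of them, replace them all by a single cycle through their
vertices: it has length at least `6`, hence contains no `C₃` and no `C₄`. If there is exactly one,
`abc`, replace it by the path `a - b - c - w` through some fourth vertex `w`; a pendant path lies on
no cycle. In both cases the edge count is kept and no `C₃` or `C₄` appears.
-/

open Finset

theorem containsCopy_iff_isContained {V W : Type*} {G : SimpleGraph V} {H : SimpleGraph W} :
    ContainsCopy G H ↔ H ⊑ G :=
  ⟨fun ⟨f, hf, hadj⟩ => ⟨⟨⟨f, hadj _ _⟩, hf⟩⟩,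
    fun ⟨f⟩ => ⟨f, f.injective, fun _ _ => f.toHom.map_adj⟩⟩

theorem extNum2_le_extNum2 {n : ℕ} {V₁ V₂ W₁ W₂ : Type*} {H₁ : SimpleGraph V₁}
    {H₂ : SimpleGraph V₂} {K₁ : SimpleGraph W₁} {K₂ : SimpleGraph W₂}
    (h : ∀ G : SimpleGraph (Fin n), H₁.Free G → H₂.Free G →
      ∃ G' : SimpleGraph (Fin n), K₁.Free G' ∧ K₂.Free G' ∧
        G.edgeSet.ncard ≤ G'.edgeSet.ncard) :
    extNum2 n H₁ H₂ ≤ extNum2 n K₁ K₂ := by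
  refine csSup_le' fun m ⟨G, hm, h₁, h₂⟩ => ?_
  rw [containsCopy_iff_isContained] at h₁ h₂
  obtain ⟨G', h₁', h₂', hle⟩ := h G h₁ h₂
  have hbdd : BddAbove {m | ∃ G : SimpleGraph (Fin n),
      G.edgeSet.ncard = m ∧ ¬ ContainsCopy G K₁ ∧ ¬ ContainsCopy G K₂} :=
    ⟨Nat.card (Sym2 (Fin n)), fun _ ⟨G, hG, _⟩ => hG ▸ Set.ncard_le_card _⟩
  exact hm ▸ hle.trans (le_csSup hbdd ⟨G', rfl, by rwa [containsCopy_iff_isContained],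
    by rwa [containsCopy_iff_isContained]⟩)

theorem cycleGraph_three_isContained_K13e : cycleGraph 3 ⊑ K13e :=
  ⟨⟨⟨Fin.castSucc, fun {a b} h => by
    fin_cases a <;> fin_cases b <;> simp_all [K13e, cycleGraph_adj]⟩, Fin.castSucc_injective 3⟩⟩

namespace SimpleGraph

variable {U V W : Type*}

theorem Copy.exists_adj_adj_ne {k : ℕ} {G : SimpleGraph V} (f : Copy (cycleGraph (k + 3)) G)
    (i : Fin (k + 3)) : ∃ j j', f j ≠ f j' ∧ G.Adj (f i) (f j) ∧ G.Adj (f i) (f j') := by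
  have hne : i - 1 ≠ i + 1 := by
    rw [Ne, sub_eq_iff_eq_add, add_assoc, left_eq_add]
    simp [Fin.ext_iff, Fin.val_add, Nat.mod_eq_of_lt]
  refine ⟨i - 1, i + 1, f.injective.ne hne, f.toHom.map_adj ?_, f.toHom.map_adj ?_⟩ <;>
    simp [← mem_neighborSet, cycleGraph_neighborSet]

theorem cycleGraph_free_cycleGraph {k m : ℕ} (hk : 3 ≤ k) (hkm : k < m) :
    (cycleGraph k).Free (cycleGraph m) := by
  obtain ⟨k, rfl⟩ := Nat.exists_eq_add_of_le' hk
  obtain ⟨m, rfl⟩ : ∃ m', m = m' + 2 := ⟨m - 2, by omega⟩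
  rintro ⟨f⟩
  have hsucc : ∀ x ∈ Set.range f, x + 1 ∈ Set.range f := by
    rintro _ ⟨i, rfl⟩
    obtain ⟨j, j', hne, hj, hj'⟩ := f.exists_adj_adj_ne i
    rw [← mem_neighborSet, cycleGraph_neighborSet] at hj hj'
    rcases hj with hj | hj
    · rcases hj' with hj' | hj'
      · exact (hne (hj.trans hj'.symm)).elim
      · exact ⟨j', hj'⟩
    · exact ⟨j, hj⟩
  have hall : ∀ t : Fin (m + 2), f 0 + t ∈ Set.range f := by
    intro t
    induction t using Fin.induction with
    | zero => exact ⟨0, (add_zero _).symm⟩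
    | succ t ih => simpa [← Fin.coeSucc_eq_succ, ← add_assoc] using hsucc _ ih
  have hsurj : Function.Surjective f := fun y => by
    simpa using hall (y - f 0)
  have := Fintype.card_le_of_surjective f hsurj
  simp only [Fintype.card_fin] at this
  omega

theorem free_sup_edge_of_forall_not_adj {k : ℕ} {G : SimpleGraph V} {x y : V} (hk : 3 ≤ k)
    (hx : ∀ z, ¬ G.Adj x z) (hG : (cycleGraph k).Free G) :
    (cycleGraph k).Free (G ⊔ edge x y) := by
  obtain ⟨k, rfl⟩ := Nat.exists_eq_add_of_le' hk
  rintro ⟨f⟩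
  have hadj : ∀ {u v}, (G ⊔ edge x y).Adj u v → u = x → v = y := by
    rintro u v (h | h) rfl
    · exact (hx v h).elim
    · rw [edge_adj] at h
      grind
  have hfx : ∀ i, f i ≠ x := by
    rintro i hi
    obtain ⟨j, j', hne, hj, hj'⟩ := f.exists_adj_adj_ne i
    exact hne ((hadj hj hi).trans (hadj hj' hi).symm)
  refine hG ⟨⟨⟨f, fun {i j} hij => ?_⟩, f.injective⟩⟩
  have h : (G ⊔ edge x y).Adj (f i) (f j) := f.toHom.map_adj hij
  rcases h with h | h
  · exact h
  · rw [edge_adj] at h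
    grind

theorem isContained_sup_of_disjoint_support {H : SimpleGraph U} {G₁ G₂ : SimpleGraph V}
    (hH : H.Connected) (hG : Disjoint G₁.support G₂.support) (h : H ⊑ G₁ ⊔ G₂) :
    H ⊑ G₁ ∨ H ⊑ G₂ := by
  obtain ⟨f⟩ := h
  set P : U → Prop := fun u => f u ∈ G₁.support
  have hP : ∀ {u v}, H.Adj u v → (G₁.Adj (f u) (f v) ∧ P u) ∨ (G₂.Adj (f u) (f v) ∧ ¬ P u) := by
    intro u v huv
    rcases f.toHom.map_adj huv with h | h
    · exact .inl ⟨h, ⟨_, h⟩⟩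
    · exact .inr ⟨h, Set.disjoint_right.mp hG ⟨_, h⟩⟩
  have hconst : ∀ u v, P u ↔ P v := fun u v => by
    obtain ⟨p⟩ := hH.preconnected u v
    induction p with
    | nil => rfl
    | cons huv _ ih =>
      refine Iff.trans ?_ ih
      rcases hP huv with ⟨h, hu⟩ | ⟨h, hu⟩
      · exact iff_of_true hu ⟨_, h.symm⟩
      · exact iff_of_false hu (Set.disjoint_right.mp hG ⟨_, h.symm⟩)
  obtain ⟨u₀⟩ := hH.nonempty
  by_cases h₀ : P u₀
  · refine .inl ⟨⟨⟨f, fun {u v} huv => ?_⟩, f.injective⟩⟩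
    rcases hP huv with ⟨h, -⟩ | ⟨-, hu⟩
    · exact h
    · exact (hu ((hconst u₀ u).mp h₀)).elim
  · refine .inr ⟨⟨⟨f, fun {u v} huv => ?_⟩, f.injective⟩⟩
    rcases hP huv with ⟨-, hu⟩ | ⟨h, -⟩
    · exact (h₀ ((hconst u₀ u).mpr hu)).elim
    · exact h

theorem IsContained.of_map {H : SimpleGraph U} {G : SimpleGraph V} {e : V ↪ W}
    (hH : ∀ a, ∃ b, H.Adj a b) (h : H ⊑ G.map e) : H ⊑ G := by
  obtain ⟨f⟩ := h
  have hrange : ∀ a, ∃ v, e v = f a := fun a => by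
    obtain ⟨b, hab⟩ := hH a
    obtain ⟨v, -, -, hv, -⟩ := (map_adj e G _ _).mp (f.toHom.map_adj hab)
    exact ⟨v, hv⟩
  choose g hg using hrange
  have hinj : Function.Injective (e ∘ g) := fun a b h => f.injective (by simpa [hg] using h)
  refine ⟨⟨⟨g, fun {a b} hab => ?_⟩, hinj.of_comp⟩⟩
  have : (G.map e).Adj (e (g a)) (e (g b)) := by rw [hg, hg]; exact f.toHom.map_adj hab
  exact map_adj_apply.mp this

theorem ncard_edgeSet_map (e : V ↪ W) (G : SimpleGraph V) :
    (G.map e).edgeSet.ncard = G.edgeSet.ncard := by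
  rw [edgeSet_map, Set.ncard_image_of_injective _ e.sym2Map.injective]

theorem ncard_edgeSet_sup [Finite V] {G₁ G₂ : SimpleGraph V} (h : Disjoint G₁ G₂) :
    (G₁ ⊔ G₂).edgeSet.ncard = G₁.edgeSet.ncard + G₂.edgeSet.ncard := by
  rw [edgeSet_sup, Set.ncard_union_eq (disjoint_edgeSet.mpr h)]

theorem ncard_edgeSet_sup_edge [Finite V] {G : SimpleGraph V} {x y : V} (hn : ¬ G.Adj x y)
    (hxy : x ≠ y) : (G ⊔ edge x y).edgeSet.ncard = G.edgeSet.ncard + 1 := by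
  rw [ncard_edgeSet_sup ((disjoint_edge G).mpr hn), edgeSet_edge_of_ne hxy, Set.ncard_singleton]

theorem two_mul_ncard_edgeSet [Fintype V] (G : SimpleGraph V) [DecidableRel G.Adj] :
    2 * G.edgeSet.ncard = ∑ v, G.degree v := by
  rw [sum_degrees_eq_twice_card_edges, ← coe_edgeFinset, Set.ncard_coe_finset]

theorem ncard_edgeSet_le_card_of_degree_le_two [Fintype V] {G : SimpleGraph V}
    [DecidableRel G.Adj] (h : ∀ v, G.degree v ≤ 2) : G.edgeSet.ncard ≤ Fintype.card V := by
  have := (two_mul_ncard_edgeSet G).trans_le (sum_le_sum fun v _ => h v)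
  simp only [sum_const, card_univ, smul_eq_mul] at this
  omega

theorem ncard_edgeSet_cycleGraph (k : ℕ) : (cycleGraph (k + 3)).edgeSet.ncard = k + 3 := by
  have := two_mul_ncard_edgeSet (cycleGraph (k + 3))
  simp only [cycleGraph_degree_three_le, sum_const, card_univ, Fintype.card_fin,
    smul_eq_mul] at this
  omega

theorem cycleGraph_three_free_iff {G : SimpleGraph V} :
    (cycleGraph 3).Free G ↔ G.CliqueFree 3 := by
  rw [cycleGraph_three_eq_top, ← cliqueFree_iff_top_free, Fintype.card_fin]

theorem eq_or_eq_of_adj_of_K13e_free {G : SimpleGraph V} (hK : K13e.Free G) {x p q y : V}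
    (hxp : G.Adj x p) (hxq : G.Adj x q) (hpq : G.Adj p q) (hxy : G.Adj x y) : y = p ∨ y = q := by
  by_contra! h
  have := hxp.ne; have := hxq.ne; have := hpq.ne; have := hxy.ne
  refine hK ⟨⟨⟨![x, p, q, y], fun {i j} hij => ?_⟩, fun i j hij => ?_⟩⟩
  · fin_cases i <;> fin_cases j <;> simp_all [K13e, adj_comm]
  · fin_cases i <;> fin_cases j <;> simp_all [eq_comm]

theorem mem_of_adj_of_isNClique_three {G : SimpleGraph V} [DecidableEq V] (hK : K13e.Free G)
    {s : Finset V} (hs : G.IsNClique 3 s) {x y : V} (hx : x ∈ s) (hxy : G.Adj x y) : y ∈ s := by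
  obtain ⟨a, b, c, hab, hac, hbc, rfl⟩ := is3Clique_iff.mp hs
  simp only [mem_insert, mem_singleton] at hx ⊢
  rcases hx with rfl | rfl | rfl
  · have := eq_or_eq_of_adj_of_K13e_free hK hab hac hbc hxy; tauto
  · have := eq_or_eq_of_adj_of_K13e_free hK hab.symm hbc hac hxy; tauto
  · have := eq_or_eq_of_adj_of_K13e_free hK hac.symm hbc.symm hab hxy; tauto

theorem isNClique_three_eq_or_disjoint {G : SimpleGraph V} [DecidableEq V] (hK : K13e.Free G)
    {s t : Finset V} (hs : G.IsNClique 3 s) (ht : G.IsNClique 3 t) : s = t ∨ Disjoint s t := by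
  refine or_iff_not_imp_right.mpr fun hst => ?_
  obtain ⟨z, hzs, hzt⟩ := not_disjoint_iff.mp hst
  refine (eq_of_subset_of_card_le (fun w hw => ?_) (by rw [hs.card_eq, ht.card_eq])).symm
  obtain rfl | hzw := eq_or_ne z w
  · exact hzs
  · exact mem_of_adj_of_isNClique_three hK hs hzs (ht.isClique hzt hw hzw)

section TriangleVerts

variable [Fintype V] [DecidableEq V] {G : SimpleGraph V} [DecidableRel G.Adj]

variable (G) in
def triangleVerts : Finset V := (G.cliqueFinset 3).sup id

variable (G) in
def triangleFreePart : SimpleGraph V := (G.induce (↑G.triangleVerts)ᶜ).spanningCoe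

theorem mem_triangleVerts {v : V} : v ∈ G.triangleVerts ↔ ∃ s, G.IsNClique 3 s ∧ v ∈ s := by
  simp [triangleVerts, mem_sup]

theorem IsNClique.subset_triangleVerts {s : Finset V} (hs : G.IsNClique 3 s) :
    s ⊆ G.triangleVerts :=
  fun _ hv => mem_triangleVerts.mpr ⟨s, hs, hv⟩

theorem mem_triangleVerts_of_adj (hK : K13e.Free G) {u v : V} (hu : u ∈ G.triangleVerts)
    (huv : G.Adj u v) : v ∈ G.triangleVerts := by
  obtain ⟨s, hs, hus⟩ := mem_triangleVerts.mp hu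
  exact hs.subset_triangleVerts (mem_of_adj_of_isNClique_three hK hs hus huv)

theorem degree_le_two_of_mem_triangleVerts (hK : K13e.Free G) {v : V}
    (hv : v ∈ G.triangleVerts) : G.degree v ≤ 2 := by
  obtain ⟨s, hs, hvs⟩ := mem_triangleVerts.mp hv
  calc G.degree v ≤ #(s.erase v) := card_le_card fun w hw => by
        rw [mem_neighborFinset] at hw
        exact mem_erase.mpr ⟨hw.ne', mem_of_adj_of_isNClique_three hK hs hvs hw⟩
    _ = 2 := by rw [card_erase_of_mem hvs, hs.card_eq]

theorem triangleVerts_eq_or_six_le_card (hK : K13e.Free G) {s : Finset V}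
    (hs : G.IsNClique 3 s) : G.triangleVerts = s ∨ 6 ≤ #G.triangleVerts := by
  refine or_iff_not_imp_left.mpr fun hne => ?_
  obtain ⟨u, huT, hus⟩ :=
    exists_of_ssubset (hs.subset_triangleVerts.ssubset_of_ne (Ne.symm hne))
  obtain ⟨t, ht, hut⟩ := mem_triangleVerts.mp huT
  have hdisj : Disjoint s t :=
    (isNClique_three_eq_or_disjoint hK hs ht).resolve_left fun h => hus (h ▸ hut)
  calc 6 = #(s ∪ t) := by rw [card_union_of_disjoint hdisj, hs.card_eq, ht.card_eq]
    _ ≤ _ := card_le_card (union_subset hs.subset_triangleVerts ht.subset_triangleVerts)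

theorem triangleFreePart_le : G.triangleFreePart ≤ G := spanningCoe_induce_le _ _

theorem support_triangleFreePart_subset :
    G.triangleFreePart.support ⊆ (↑G.triangleVerts)ᶜ := by
  rw [triangleFreePart, support_spanningCoe, Set.image_subset_iff]
  exact fun v _ => v.2

theorem cliqueFree_triangleFreePart : G.triangleFreePart.CliqueFree 3 := by
  intro s hs
  obtain ⟨a, b, c, hab, -, -, rfl⟩ := is3Clique_iff.mp hs
  exact support_triangleFreePart_subset ⟨b, hab⟩
    ((hs.mono triangleFreePart_le).subset_triangleVerts (by simp))

theorem ncard_edgeSet_le_triangleFreePart_add (hK : K13e.Free G) :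
    G.edgeSet.ncard ≤ G.triangleFreePart.edgeSet.ncard + #G.triangleVerts := by
  set T : Set V := ↑G.triangleVerts
  have hle : G ≤ G.triangleFreePart ⊔ (G.induce T).spanningCoe := by
    intro u v huv
    by_cases hu : u ∈ T
    · exact .inr ⟨huv.ne, ⟨u, hu⟩, ⟨v, mem_triangleVerts_of_adj hK hu huv⟩, huv, rfl, rfl⟩
    · have hv : v ∉ T := fun hv => hu (mem_triangleVerts_of_adj hK hv huv.symm)
      exact .inl ⟨huv.ne, ⟨u, hu⟩, ⟨v, hv⟩, huv, rfl, rfl⟩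
  have hT : (G.induce T).edgeSet.ncard ≤ #G.triangleVerts := by
    refine (ncard_edgeSet_le_card_of_degree_le_two fun v => ?_).trans (by simp [T])
    exact ((Copy.induce G T).degree_le v).trans (degree_le_two_of_mem_triangleVerts hK v.2)
  calc G.edgeSet.ncard ≤ (G.triangleFreePart ⊔ (G.induce T).spanningCoe).edgeSet.ncard :=
        Set.ncard_le_ncard (edgeSet_mono hle)
    _ ≤ G.triangleFreePart.edgeSet.ncard + (G.induce T).spanningCoe.edgeSet.ncard := by
        rw [edgeSet_sup]; exact Set.ncard_union_le _ _
    _ ≤ _ := by rw [ncard_edgeSet_map]; omega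

theorem exists_free_of_triangleVerts_eq (hV : 4 ≤ Fintype.card V) (hK : K13e.Free G)
    (h4 : (cycleGraph 4).Free G) {s : Finset V} (hs : G.IsNClique 3 s)
    (hT : G.triangleVerts = s) :
    ∃ G' : SimpleGraph V, (cycleGraph 3).Free G' ∧ (cycleGraph 4).Free G' ∧
      G.edgeSet.ncard ≤ G'.edgeSet.ncard := by
  obtain ⟨a, b, c, hab, hac, hbc, rfl⟩ := is3Clique_iff.mp hs
  obtain ⟨w, -, hw⟩ := exists_mem_notMem_of_card_lt_card
    (s := {a, b, c}) (t := univ) (by rw [hs.card_eq, card_univ]; omega)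
  have hout : ∀ x ∈ ({a, b, c} : Finset V), ∀ z, ¬ G.triangleFreePart.Adj x z :=
    fun x hx z hxz => support_triangleFreePart_subset ⟨z, hxz⟩ (hT ▸ hx)
  simp only [mem_insert, mem_singleton, not_or] at hout hw
  set G₁ := G.triangleFreePart ⊔ edge c w
  set G₂ := G₁ ⊔ edge b c
  have h₁ : ∀ z, ¬ G.triangleFreePart.Adj c z := hout c (by simp)
  have h₂ : ∀ z, ¬ G₁.Adj b z := by
    rintro z (h | h)
    · exact hout b (by simp) z h
    · rw [edge_adj] at h; grind [hbc.ne]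
  have h₃ : ∀ z, ¬ G₂.Adj a z := by
    rintro z ((h | h) | h)
    · exact hout a (by simp) z h
    · rw [edge_adj] at h; grind [hac.ne]
    · rw [edge_adj] at h; grind [hab.ne, hac.ne]
  have hfree : ∀ k, 3 ≤ k → (cycleGraph k).Free G.triangleFreePart →
      (cycleGraph k).Free (G₂ ⊔ edge a b) := fun k hk h =>
    free_sup_edge_of_forall_not_adj hk h₃ <| free_sup_edge_of_forall_not_adj hk h₂ <|
      free_sup_edge_of_forall_not_adj hk h₁ h
  refine ⟨G₂ ⊔ edge a b,
    hfree 3 le_rfl (cycleGraph_three_free_iff.mpr cliqueFree_triangleFreePart),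
    hfree 4 (by norm_num) fun h => h4 (h.mono_right triangleFreePart_le), ?_⟩
  have := ncard_edgeSet_le_triangleFreePart_add hK
  rw [hT, hs.card_eq] at this
  rw [ncard_edgeSet_sup_edge (h₃ b) hab.ne, ncard_edgeSet_sup_edge (h₂ c) hbc.ne,
    ncard_edgeSet_sup_edge (h₁ w) (Ne.symm hw.2.2)]
  omega

theorem exists_free_of_five_le_card_triangleVerts (hK : K13e.Free G)
    (h4 : (cycleGraph 4).Free G) (hT : 5 ≤ #G.triangleVerts) :
    ∃ G' : SimpleGraph V, (cycleGraph 3).Free G' ∧ (cycleGraph 4).Free G' ∧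
      G.edgeSet.ncard ≤ G'.edgeSet.ncard := by
  obtain ⟨m, hm⟩ : ∃ m, #G.triangleVerts = m + 3 := ⟨_, (Nat.sub_add_cancel (by omega)).symm⟩
  set e : Fin (m + 3) ↪ V :=
    (equivFinOfCardEq hm).symm.toEmbedding.trans (Function.Embedding.subtype _)
  set C := (cycleGraph (m + 3)).map e
  have hdisj : Disjoint G.triangleFreePart.support C.support := by
    refine Set.disjoint_of_subset_left support_triangleFreePart_subset
      (Set.disjoint_compl_left_iff_subset.mpr ?_)
    rw [support_map, Set.image_subset_iff]
    exact fun i _ => ((equivFinOfCardEq hm).symm i).2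
  have hfree : ∀ k, 3 ≤ k → k < m + 3 → (cycleGraph k).Free G.triangleFreePart →
      (cycleGraph k).Free (G.triangleFreePart ⊔ C) := by
    intro k hk hkm hG h
    obtain ⟨k, rfl⟩ := Nat.exists_eq_add_of_le' hk
    rcases isContained_sup_of_disjoint_support cycleGraph_connected hdisj h with h | h
    · exact hG h
    · refine cycleGraph_free_cycleGraph hk hkm (h.of_map fun i => ⟨i + 1, ?_⟩)
      simp [← mem_neighborSet, cycleGraph_neighborSet]
  refine ⟨G.triangleFreePart ⊔ C,
    hfree 3 le_rfl (by omega) (cycleGraph_three_free_iff.mpr cliqueFree_triangleFreePart),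
    hfree 4 (by norm_num) (by omega) fun h => h4 (h.mono_right triangleFreePart_le), ?_⟩
  rw [ncard_edgeSet_sup (disjoint_of_disjoint_support C hdisj), ncard_edgeSet_map,
    ncard_edgeSet_cycleGraph, ← hm]
  exact ncard_edgeSet_le_triangleFreePart_add hK

theorem exists_free_of_K13e_free (hV : 4 ≤ Fintype.card V) (hK : K13e.Free G)
    (h4 : (cycleGraph 4).Free G) :
    ∃ G' : SimpleGraph V, (cycleGraph 3).Free G' ∧ (cycleGraph 4).Free G' ∧
      G.edgeSet.ncard ≤ G'.edgeSet.ncard := by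
  by_cases h3 : G.CliqueFree 3
  · exact ⟨G, cycleGraph_three_free_iff.mpr h3, h4, le_rfl⟩
  obtain ⟨s, hs⟩ := not_forall_not.mp h3
  rcases triangleVerts_eq_or_six_le_card hK hs with hT | hT
  · exact exists_free_of_triangleVerts_eq hV hK h4 hs hT
  · exact exists_free_of_five_le_card_triangleVerts hK h4 (by omega)

end TriangleVerts

end SimpleGraph

theorem extNum_K13e_C4_eq_extNum_C3_C4_general (n : ℕ) (h4 : 4 ≤ n) :
    extNum2 n K13e (SimpleGraph.cycleGraph 4) =
      extNum2 n (SimpleGraph.cycleGraph 3) (SimpleGraph.cycleGraph 4) := by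
  classical
  refine le_antisymm (extNum2_le_extNum2 fun G hK hC4 => ?_)
    (extNum2_le_extNum2 fun G hC3 hC4 =>
      ⟨G, fun h => hC3 (cycleGraph_three_isContained_K13e.trans h), hC4, le_rfl⟩)
  exact exists_free_of_K13e_free (by simpa using h4) hK hC4

/-- For 4 ≤ n ≤ 10, ext(n,{K_{1,3}+e, C₄}) = ext(n,{C₃, C₄}). -/
theorem extNum_K13e_C4_eq_extNum_C3_C4 (n : ℕ) (h4 : 4 ≤ n) (h10 : n ≤ 10) :
    extNum2 n K13e (SimpleGraph.cycleGraph 4) =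
      extNum2 n (SimpleGraph.cycleGraph 3) (SimpleGraph.cycleGraph 4) :=
  extNum_K13e_C4_eq_extNum_C3_C4_general n h4
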